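/- arXiv:2405.16407 — 3 statements merged into one kernel-verified Lean document; each statement's English description precedes it below -/
import Mathlib

section
/- Let y ∈ ℝ^{ℕ^n} be a full moment sequence with M(y) positive semidefinite of rank 1 and y_0 = 1. Then there exists v ∈ ℝ^n such that y_α = v^α for all α ∈ ℕ^n. -/
/-!
The vanishing of the minor with rows `a, 0` and columns `b, 0` of the moment matrix reads
`y (a + b) * y 0 = y a * y b`, so `y` is multiplicative once `y 0 = 1`. A multiplicative `y` on
`ℕⁿ` is determined by its values `v i` at the unit vectors, which gives `y α = v ^ α`.
-/

theorem map_add_of_minors_eq {M R : Type*} [AddZeroClass M] [MulOneClass R] {y : M → R}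
    (hy0 : y 0 = 1) (hminor : ∀ α β γ δ : M, y (α + β) * y (γ + δ) = y (α + δ) * y (γ + β))
    (a b : M) : y (a + b) = y a * y b := by
  simpa [hy0] using hminor a b 0 0

def AddMonoidHom.ofMapAdd {M R : Type*} [AddZeroClass M] [MulOneClass R] (y : M → R)
    (hy0 : y 0 = 1) (hadd : ∀ a b, y (a + b) = y a * y b) : M →+ Additive R where
  toFun a := Additive.ofMul (y a)
  map_zero' := congrArg Additive.ofMul hy0
  map_add' a b := congrArg Additive.ofMul (hadd a b)

theorem eq_prod_pow_of_map_add {ι R : Type*} [Fintype ι] [DecidableEq ι] [CommMonoid R]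
    {y : (ι → ℕ) → R} (hy0 : y 0 = 1) (hadd : ∀ a b, y (a + b) = y a * y b) (α : ι → ℕ) :
    y α = ∏ i, y (Pi.single i 1) ^ α i := by
  let f := AddMonoidHom.ofMapAdd y hy0 hadd
  calc y α = Additive.toMul (f (∑ i, α i • Pi.single i 1)) := by rw [← pi_eq_sum_univ' α]; rfl
    _ = ∏ i, y (Pi.single i 1) ^ α i := by
      simp only [map_sum, map_nsmul, toMul_sum, toMul_nsmul]; rfl

theorem stmt9_general (n : ℕ) (y : (Fin n → ℕ) → ℝ) (hy0 : y 0 = 1)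
    (hminor : ∀ α β γ δ : Fin n → ℕ, y (α + β) * y (γ + δ) = y (α + δ) * y (γ + β)) :
    ∃ v : Fin n → ℝ, ∀ α : Fin n → ℕ, y α = ∏ i, v i ^ α i :=
  ⟨fun i => y (Pi.single i 1),
    eq_prod_pow_of_map_add hy0 (map_add_of_minors_eq hy0 hminor)⟩

/-- A full moment sequence `y` with `y_0 = 1` whose (infinite) moment matrix
`M(y) = (y_{α+β})` is PSD of rank one (all `2×2` minors vanish and `M(y) ≠ 0`)
is the Dirac moment sequence of some point `v ∈ ℝ^n`. -/
theorem stmt9 (n : ℕ) (y : (Fin n → ℕ) → ℝ) (hy0 : y 0 = 1)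
    (hpsd : ∀ x : (Fin n → ℕ) →₀ ℝ,
      0 ≤ ∑ α ∈ x.support, ∑ β ∈ x.support, x α * y (α + β) * x β)
    (hminor : ∀ α β γ δ : Fin n → ℕ, y (α + β) * y (γ + δ) = y (α + δ) * y (γ + β))
    (hne : ∃ α β : Fin n → ℕ, y (α + β) ≠ 0) :
    ∃ v : Fin n → ℝ, ∀ α : Fin n → ℕ, y α = ∏ i, v i ^ α i :=
  stmt9_general n y hy0 hminor
end

section
/- Let m > n and let S_1 = {(A, η) ∈ ℂ^{m×n} × ℂ^m : rank(A|η) ≤ n and rank(A) = n}. The map β: S_1 → ℂ^{m×n} × ℂ^m, (A, η) ↦ (A, p_1(η),...,p_m(η)) restricted to the subset W_1 of S_1 where (A|σ(η)) has rank n+1 for every nonidentity permutation σ, is injective. -/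
/-!
Newton's identities recover the elementary symmetric functions of `η` from `p_1(η), …, p_m(η)`
(dividing by `k` is where characteristic zero enters), hence the polynomial `∏ (X - η_i)` and
the multiset of entries of `η`. So two points of `W_1` with the same image are `(A, η)` and
`(A, η ∘ σ)`; since `rank (A | η ∘ σ) ≤ n`, the definition of `W_1` forces `σ = 1`.
-/

/-- The `m × (n+1)` matrix obtained by appending `v` to `A` as a last column. -/
def aug {m n : ℕ} (A : Matrix (Fin m) (Fin n) ℂ) (v : Fin m → ℂ) :
    Matrix (Fin m) (Fin (n + 1)) ℂ :=
  Matrix.of fun i => Fin.snoc (A i) (v i)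

open Finset MvPolynomial

theorem MvPolynomial.eval_esymm_eq_of_eval_psum_eq {σ K : Type*} [Fintype σ] [CommRing K]
    [IsDomain K] [CharZero K] {x y : σ → K} {N : ℕ}
    (h : ∀ j ∈ Icc 1 N, eval x (psum σ K j) = eval y (psum σ K j)) :
    ∀ k ≤ N, eval x (esymm σ K k) = eval y (esymm σ K k) := by
  intro k
  induction k using Nat.strong_induction_on with
  | _ k ih =>
    intro hkN
    rcases Nat.eq_zero_or_pos k with rfl | hk
    · simp
    have newton (z : σ → K) := congrArg (eval z) (mul_esymm_eq_sum σ K k)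
    simp only [map_mul, map_pow, map_neg, map_one, map_natCast, map_sum] at newton
    refine mul_left_cancel₀ (Nat.cast_ne_zero.mpr hk.ne') ?_
    rw [newton x, newton y]
    congr 1
    refine sum_congr rfl fun a ha => ?_
    simp only [mem_filter, HasAntidiagonal.mem_antidiagonal] at ha
    rw [ih a.1 ha.2 (by omega), h a.2 (mem_Icc.mpr ⟨by omega, by omega⟩)]

theorem Multiset.eq_of_esymm_eq {K : Type*} [CommRing K] [IsDomain K] {s t : Multiset K}
    (hcard : card s = card t) (h : ∀ k ≤ card s, s.esymm k = t.esymm k) : s = t := by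
  have hprod : (s.map fun a => Polynomial.X - Polynomial.C a).prod
      = (t.map fun a => Polynomial.X - Polynomial.C a).prod := by
    rw [prod_X_sub_X_eq_sum_esymm, prod_X_sub_X_eq_sum_esymm, ← hcard]
    exact sum_congr rfl fun j hj => by rw [h j (Nat.lt_succ_iff.mp (mem_range.mp hj))]
  simpa [Polynomial.roots_multiset_prod_X_sub_C] using congrArg Polynomial.roots hprod

theorem Equiv.Perm.exists_comp_eq_of_map_univ_eq {ι α : Type*} [Fintype ι]
    {f g : ι → α} (h : univ.val.map f = univ.val.map g) : ∃ τ : Equiv.Perm ι, f ∘ τ = g := by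
  classical
  have hfiber (c : α) : Fintype.card {i // f i = c} = Fintype.card {i // g i = c} := by
    simpa [Fintype.card_subtype, Multiset.count_map, eq_comm, Finset.card] using
      congrArg (Multiset.count c) h
  exact ⟨Equiv.ofFiberEquiv fun c => Fintype.equivOfCardEq (hfiber c).symm,
    funext (Equiv.ofFiberEquiv_map _)⟩

theorem Equiv.Perm.exists_comp_eq_of_sum_pow_eq {ι K : Type*} [Fintype ι] [CommRing K]
    [IsDomain K] [CharZero K] {x y : ι → K}
    (h : ∀ j ∈ Icc 1 (Fintype.card ι), ∑ i, x i ^ j = ∑ i, y i ^ j) :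
    ∃ τ : Equiv.Perm ι, x ∘ τ = y := by
  refine Equiv.Perm.exists_comp_eq_of_map_univ_eq (Multiset.eq_of_esymm_eq (by simp) ?_)
  intro k hk
  simp only [Multiset.card_map, card_val] at hk
  rw [← aeval_esymm_eq_multiset_esymm ι K, ← aeval_esymm_eq_multiset_esymm ι K]
  exact eval_esymm_eq_of_eval_psum_eq (by simpa [psum] using h) k hk

theorem stmt12_general (m n : ℕ) :
    Set.InjOn
      (fun p : Matrix (Fin m) (Fin n) ℂ × (Fin m → ℂ) =>
        (p.1, fun k : Fin m => ∑ i, p.2 i ^ ((k : ℕ) + 1)))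
      {p : Matrix (Fin m) (Fin n) ℂ × (Fin m → ℂ) |
        (aug p.1 p.2).rank ≤ n ∧ p.1.rank = n ∧
        ∀ σ : Equiv.Perm (Fin m), σ ≠ 1 →
          (aug p.1 fun i => p.2 (σ i)).rank = n + 1} := by
  rintro ⟨A, η⟩ ⟨-, -, hη⟩ ⟨B, ζ⟩ ⟨hζ, -, -⟩ hβ
  obtain ⟨rfl, hpow⟩ := Prod.ext_iff.mp hβ
  have hsum : ∀ j ∈ Icc 1 (Fintype.card (Fin m)), ∑ i, η i ^ j = ∑ i, ζ i ^ j := by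
    intro j hj
    obtain ⟨hj1, hjm⟩ := mem_Icc.mp hj
    obtain ⟨k, rfl⟩ := Nat.exists_eq_add_of_le' hj1
    exact congrFun hpow ⟨k, by simpa using hjm⟩
  obtain ⟨τ, rfl⟩ := Equiv.Perm.exists_comp_eq_of_sum_pow_eq hsum
  by_cases hτ : τ = 1
  · subst hτ; rfl
  · exact absurd ((hη τ hτ).symm.trans_le hζ) (Nat.not_succ_le_self n)

/-- The map `β : (A, η) ↦ (A, p_1(η), ..., p_m(η))` is injective on the subset `W_1` of
`S_1 = {(A, η) : rank(A|η) ≤ n, rank A = n}` where `rank (A|σ(η)) = n + 1` for every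
nonidentity permutation `σ`. -/
theorem stmt12 (m n : ℕ) (hn : 0 < n) (hm : n < m) :
    Set.InjOn
      (fun p : Matrix (Fin m) (Fin n) ℂ × (Fin m → ℂ) =>
        (p.1, fun k : Fin m => ∑ i, p.2 i ^ ((k : ℕ) + 1)))
      {p : Matrix (Fin m) (Fin n) ℂ × (Fin m → ℂ) |
        (aug p.1 p.2).rank ≤ n ∧ p.1.rank = n ∧
        ∀ σ : Equiv.Perm (Fin m), σ ≠ 1 →
          (aug p.1 fun i => p.2 (σ i)).rank = n + 1} :=
  stmt12_general m n
end

section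
/- For a generic matrix A* ∈ ℂ^{m×n} with m > n, for any nonidentity permutation σ of {1,...,m} and generic ξ* ∈ ℂ^n, the matrix obtained by appending σ(A*ξ*) as a column to A* has rank n+1; equivalently, σ(A*ξ*) does not lie in the column space of A*. Formally: there is a nonempty Zariski-open subset of ℂ^{m×n} × ℂ^n on which rank(A* | σ(A*ξ*)) = n+1 for all σ ≠ 1. -/
/-!
Fix `σ ≠ 1` and `i₀` with `σ i₀ ≠ i₀`. Take for `A` the matrix whose columns are distinct standard
basis vectors `e_{g j}`, with `g 0 = σ i₀` and `i₀` not among the `g j`, and `ξ = e_0`. Then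
`Aξ = e_{σ i₀}`, so `σ(Aξ) = e_{i₀}` and `B = (A | σ(Aξ))` has distinct standard basis columns:
`Bᵀ B = 1`. Hence `det (Bᵀ B)`, a polynomial in the entries of `A` and `ξ`, is nonzero for every
`σ ≠ 1`, and the nonvanishing locus of the product of these polynomials is a nonempty Zariski-open
set on which each `Bᵀ B` is invertible, forcing `rank B = n + 1`.
-/

/-- A subset of `ℂ^ι` is Zariski closed if it is the common zero locus of a set of
polynomials. -/
def IsZClosed {ι : Type} (S : Set (ι → ℂ)) : Prop :=
  ∃ T : Set (MvPolynomial ι ℂ), S = {x | ∀ p ∈ T, MvPolynomial.eval x p = 0}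

def IsZOpen {ι : Type} (S : Set (ι → ℂ)) : Prop := IsZClosed Sᶜ

open MvPolynomial Matrix

theorem Matrix.rank_eq_card_of_det_mul_ne_zero {K m n : Type*} [Field K] [Fintype m]
    [Fintype n] [DecidableEq n] (C : Matrix n m K) (B : Matrix m n K) (h : (C * B).det ≠ 0) :
    B.rank = Fintype.card n :=
  le_antisymm B.rank_le_card_width <|
    calc Fintype.card n = (C * B).rank :=
          (rank_of_isUnit _ ((isUnit_iff_isUnit_det _).2 h.isUnit)).symm
      _ ≤ B.rank := rank_mul_le_right C B

theorem Matrix.one_submatrix_id_transpose_mul_self {R l m : Type*} [NonAssocSemiring R] [Fintype m]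
    [DecidableEq l] [DecidableEq m] {e : l → m} (he : Function.Injective e) :
    ((1 : Matrix m m R).submatrix id e)ᵀ * (1 : Matrix m m R).submatrix id e = 1 := by
  rw [transpose_submatrix, transpose_one, ← submatrix_mul _ _ _ _ _ Function.bijective_id,
    one_mul, submatrix_one e he]

theorem exists_injective_apply_eq_notMem_range {α β : Type*} [Fintype α] [Fintype β]
    (h : Fintype.card α < Fintype.card β) (a : α) {b c : β} (hbc : b ≠ c) :
    ∃ g : α → β, Function.Injective g ∧ g a = b ∧ c ∉ Set.range g := by
  classical
  obtain ⟨e⟩ : Nonempty (α ↪ {y // y ≠ c}) :=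
    Function.Embedding.nonempty_of_card_le (by simp [Fintype.card_subtype_compl]; omega)
  let τ := Equiv.swap (e a) ⟨b, hbc⟩
  refine ⟨fun x => (τ (e x) : β), Subtype.val_injective.comp (τ.injective.comp e.injective),
    by simp [τ], ?_⟩
  rintro ⟨x, hx⟩
  exact (τ (e x)).2 hx

theorem MvPolynomial.nonempty_setOf_eval_ne_zero {K ι : Type*} [CommRing K] [IsDomain K]
    [Infinite K] {p : MvPolynomial ι K} (hp : p ≠ 0) : {x | eval x p ≠ 0}.Nonempty := by
  by_contra h
  exact hp (MvPolynomial.funext fun x => by simpa using not_exists.1 h x)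

theorem isZOpen_setOf_eval_ne_zero {ι : Type} (p : MvPolynomial ι ℂ) :
    IsZOpen {x | eval x p ≠ 0} :=
  ⟨{p}, by ext; simp⟩

section PermAug

variable {R : Type*} [NonAssocSemiring R] {m n : ℕ}

/-- `permAug A ξ σ` is the matrix `(A | σ(Aξ))`; over `ℂ` it unfolds to
`aug A (fun i => (A *ᵥ ξ) (σ i))`. -/
def permAug (A : Matrix (Fin m) (Fin n) R) (ξ : Fin n → R) (σ : Equiv.Perm (Fin m)) :
    Matrix (Fin m) (Fin (n + 1)) R :=
  of fun i => Fin.snoc (A i) ((A *ᵥ ξ) (σ i))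

theorem permAug_map {S : Type*} [NonAssocSemiring S] (f : R →+* S) (A : Matrix (Fin m) (Fin n) R)
    (ξ : Fin n → R) (σ : Equiv.Perm (Fin m)) :
    (permAug A ξ σ).map f = permAug (A.map f) (f ∘ ξ) σ := by
  ext i j
  refine Fin.lastCases ?_ (fun j => ?_) j <;> simp [permAug, RingHom.map_mulVec]

theorem permAug_one_submatrix_single (g : Fin n → Fin m) (k : Fin n) (σ : Equiv.Perm (Fin m)) :
    permAug ((1 : Matrix (Fin m) (Fin m) R).submatrix id g) (Pi.single k 1) σ =
      (1 : Matrix (Fin m) (Fin m) R).submatrix id (Fin.snoc g (σ.symm (g k))) := by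
  ext i j
  refine Fin.lastCases ?_ (fun j => ?_) j
  · simp [permAug, one_apply, Equiv.eq_symm_apply]
  · simp only [permAug, of_apply, submatrix_apply, Fin.snoc_castSucc]
    rw [Fin.snoc_castSucc]

theorem exists_transpose_mul_permAug_eq_one (hn : 0 < n) (hm : n < m) {σ : Equiv.Perm (Fin m)}
    (hσ : σ ≠ 1) :
    ∃ (A : Matrix (Fin m) (Fin n) R) (ξ : Fin n → R), (permAug A ξ σ)ᵀ * permAug A ξ σ = 1 := by
  obtain ⟨i₀, hi₀⟩ : ∃ i, σ i ≠ i := by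
    by_contra! h
    exact hσ (Equiv.ext h)
  obtain ⟨g, hg, hgk, hi₀g⟩ :=
    exists_injective_apply_eq_notMem_range (α := Fin n) (by simpa using hm) ⟨0, hn⟩ hi₀
  refine ⟨(1 : Matrix (Fin m) (Fin m) R).submatrix id g, Pi.single ⟨0, hn⟩ 1, ?_⟩
  rw [permAug_one_submatrix_single g ⟨0, hn⟩ σ, hgk, Equiv.symm_apply_apply]
  exact one_submatrix_id_transpose_mul_self (Fin.snoc_injective_iff.2 ⟨hg, hi₀g⟩)

end PermAug

section GenericMatrix

variable {R : Type*} {m n : ℕ}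

def coordMatrix (x : Fin m × Fin n ⊕ Fin n → R) : Matrix (Fin m) (Fin n) R :=
  of fun i j => x (.inl (i, j))

def coordVec (x : Fin m × Fin n ⊕ Fin n → R) : Fin n → R :=
  fun j => x (.inr j)

theorem coordMatrix_comp {S : Type*} (f : R → S) (x : Fin m × Fin n ⊕ Fin n → R) :
    coordMatrix (f ∘ x) = (coordMatrix x).map f :=
  rfl

theorem coordVec_comp {S : Type*} (f : R → S) (x : Fin m × Fin n ⊕ Fin n → R) :
    coordVec (f ∘ x) = f ∘ coordVec x :=
  rfl

variable [CommRing R]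

variable (R m n) in
/-- `det (Bᵀ * B)` for the matrix `B = (A | σ(Aξ))` with the entries of `A` and `ξ` as variables. -/
noncomputable def permAugDetPoly (σ : Equiv.Perm (Fin m)) :
    MvPolynomial (Fin m × Fin n ⊕ Fin n) R :=
  let B := permAug (coordMatrix X) (coordVec X) σ
  (Bᵀ * B).det

theorem eval_permAugDetPoly (x : Fin m × Fin n ⊕ Fin n → R) (σ : Equiv.Perm (Fin m)) :
    eval x (permAugDetPoly R m n σ) =
      ((permAug (coordMatrix x) (coordVec x) σ)ᵀ *
        permAug (coordMatrix x) (coordVec x) σ).det := by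
  have hX : (eval x ∘ X : _ → R) = x := funext fun _ => eval_X _
  rw [permAugDetPoly, RingHom.map_det, RingHom.mapMatrix_apply, Matrix.map_mul, transpose_map,
    permAug_map, ← coordMatrix_comp, ← coordVec_comp, hX]

theorem permAugDetPoly_ne_zero [Nontrivial R] (hn : 0 < n) (hm : n < m) {σ : Equiv.Perm (Fin m)}
    (hσ : σ ≠ 1) : permAugDetPoly R m n σ ≠ 0 := by
  obtain ⟨A, ξ, h⟩ := exists_transpose_mul_permAug_eq_one (R := R) hn hm hσ
  intro h0
  have := eval_permAugDetPoly (Sum.elim (fun p => A p.1 p.2) ξ) σ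
  rw [h0, map_zero] at this
  exact zero_ne_one (this.trans ((congrArg det h).trans det_one))

end GenericMatrix

/-- For generic `(A, ξ) ∈ ℂ^{m×n} × ℂ^n` (a nonempty Zariski-open set, with the product
space encoded as a function space) and every nonidentity permutation `σ`,
the matrix `(A | σ(Aξ))` has rank `n + 1`. -/
theorem stmt18 (m n : ℕ) (hn : 0 < n) (hm : n < m) :
    ∃ U : Set ((Fin m × Fin n ⊕ Fin n) → ℂ), IsZOpen U ∧ U.Nonempty ∧
      ∀ x ∈ U, ∀ σ : Equiv.Perm (Fin m), σ ≠ 1 →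
        (aug (Matrix.of fun i j => x (Sum.inl (i, j)))
          (fun i => (Matrix.of fun i' j => x (Sum.inl (i', j))).mulVec
            (fun j => x (Sum.inr j)) (σ i))).rank = n + 1 := by
  let P := ∏ σ ∈ Finset.univ.filter (· ≠ 1), permAugDetPoly ℂ m n σ
  have hP : P ≠ 0 := Finset.prod_ne_zero_iff.2 fun σ hσ =>
    permAugDetPoly_ne_zero hn hm (Finset.mem_filter.1 hσ).2
  refine ⟨{x | eval x P ≠ 0}, isZOpen_setOf_eval_ne_zero P, nonempty_setOf_eval_ne_zero hP,
    fun x hx σ hσ => ?_⟩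
  show (permAug (coordMatrix x) (coordVec x) σ).rank = n + 1
  rw [Set.mem_ofPred, map_prod, Finset.prod_ne_zero_iff] at hx
  have hdet := hx σ (Finset.mem_filter.2 ⟨Finset.mem_univ σ, hσ⟩)
  rw [eval_permAugDetPoly] at hdet
  exact (rank_eq_card_of_det_mul_ne_zero _ _ hdet).trans (Fintype.card_fin _)
end
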